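/- arXiv:1004.0653 — 2 statements merged into one kernel-verified Lean document; each statement's English description precedes it below -/
import Mathlib

section
/- Let F be a generalised clause-set (each variable v has finite domain D_v, literals are of the form 'v ≠ ε' for ε ∈ D_v, clauses are sets of such literals, F a set of clauses). For each variable v choose an unsatisfiable boolean clause-set T(v), with clause-sets for distinct variables variable-disjoint, and an injection γ_v : D_v → T(v) such that each γ_v(ε) is a necessary clause of T(v) (i.e., T(v) \ {γ_v(ε)} is satisfiable). Define the translation T_γ(F): replace in every clause C ∈ F each literal 'v ≠ ε' by the literals of γ_v(ε), and add for every variable v all clauses of T(v) \ {γ_v(ε) : ε ∈ D_v}. Then T_γ(F) is satisfiable (as a boolean clause-set) if and only if F is satisfiable (as a generalised clause-set). -/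
/-- correctness of the generic translation scheme from generalised
clause-sets to boolean clause-sets. A generalised clause-set `F` has variables `ν`
with finite domains `D v ⊆ μ`; a literal is a pair `(v, ε)` meaning `v ≠ ε`. For
each variable `v` an unsatisfiable boolean clause-set `T v` over boolean variables
`β` is chosen (variable-disjoint for distinct variables), together with an
injection `γ v : D v → T v` picking necessary clauses. The translation replaces
each literal `(v, ε)` of a clause by the literals of `γ v ε`, and adds for every
variable `v` occurring in `F` the remainder clauses `T v \ γ v '' (D v)`. Then the
translation is satisfiable iff `F` is satisfiable. -/
theorem generic_translation_sat_iff {ν μ β : Type*} [DecidableEq β]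
    (D : ν → Finset μ) (hD : ∀ v, (D v).Nonempty)
    (F : Set (Finset (ν × μ)))
    (hF : ∀ C ∈ F, ∀ l ∈ C, l.2 ∈ D l.1)
    (T : ν → Set (Finset (β × Bool)))
    (hTunsat : ∀ v, ¬ ∃ ψ : β → Bool, ∀ C ∈ T v, ∃ l ∈ C, ψ l.1 = l.2)
    (hTdisj : ∀ v w, v ≠ w → ∀ C ∈ T v, ∀ C' ∈ T w, ∀ x : β,
      (∃ b, (x, b) ∈ C) → ¬ ∃ b, (x, b) ∈ C')
    (γ : ν → μ → Finset (β × Bool))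
    (hγmem : ∀ v, ∀ ε ∈ D v, γ v ε ∈ T v)
    (hγinj : ∀ v, ∀ ε ∈ D v, ∀ ε' ∈ D v, γ v ε = γ v ε' → ε = ε')
    (hγnec : ∀ v, ∀ ε ∈ D v,
      ∃ ψ : β → Bool, ∀ C ∈ T v, C ≠ γ v ε → ∃ l ∈ C, ψ l.1 = l.2) :
    (∃ ψ : β → Bool,
        (∀ C ∈ F, ∃ l ∈ C.biUnion (fun l => γ l.1 l.2), ψ l.1 = l.2) ∧
        (∀ v : ν, (∃ C ∈ F, ∃ ε : μ, (v, ε) ∈ C) →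
          ∀ R ∈ T v, (∀ ε ∈ D v, R ≠ γ v ε) → ∃ l ∈ R, ψ l.1 = l.2))
    ↔ (∃ φ : ν → μ, (∀ v, φ v ∈ D v) ∧ ∀ C ∈ F, ∃ l ∈ C, φ l.1 ≠ l.2) := by
  classical
  constructor
  · rintro ⟨ψ, h1, h2⟩
    have key : ∀ v, (∃ C ∈ F, ∃ ε, (v, ε) ∈ C) →
        ∃ ε ∈ D v, ¬ ∃ l ∈ γ v ε, ψ l.1 = l.2 := by
      intro v hv
      by_contra hcon
      push_neg at hcon
      apply hTunsat v
      refine ⟨ψ, fun R hR => ?_⟩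
      by_cases hRε : ∀ ε ∈ D v, R ≠ γ v ε
      · exact h2 v hv R hR hRε
      · push_neg at hRε
        obtain ⟨ε, hε, rfl⟩ := hRε
        exact hcon ε hε
    choose ε0 hε0D hε0 using key
    refine ⟨fun v => if h : ∃ C ∈ F, ∃ ε, (v, ε) ∈ C then ε0 v h else (hD v).choose,
      fun v => ?_, ?_⟩
    · dsimp only
      split
      · exact hε0D _ _
      · exact (hD v).choose_spec
    · intro C hC
      obtain ⟨l, hl, hψ⟩ := h1 C hC
      rw [Finset.mem_biUnion] at hl
      obtain ⟨a, haC, hla⟩ := hl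
      refine ⟨a, haC, ?_⟩
      have hvocc : ∃ C ∈ F, ∃ ε, (a.1, ε) ∈ C := ⟨C, hC, a.2, by simpa using haC⟩
      dsimp only
      rw [dif_pos hvocc]
      intro heq
      apply hε0 a.1 hvocc
      rw [heq]
      exact ⟨l, hla, hψ⟩
  · rintro ⟨φ, hφD, hφ⟩
    choose ψv hψv using fun v => hγnec v (φ v) (hφD v)
    let ψ : β → Bool := fun x =>
      if h : ∃ v, ∃ C ∈ T v, ∃ b, (x, b) ∈ C then ψv h.choose x else true
    have hψval : ∀ v x, (∃ C ∈ T v, ∃ b, (x, b) ∈ C) → ψ x = ψv v x := by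
      intro v x hx
      have h : ∃ v, ∃ C ∈ T v, ∃ b, (x, b) ∈ C := ⟨v, hx⟩
      have hw := h.choose_spec
      have hv : h.choose = v := by
        by_contra hne
        obtain ⟨C, hC, hb⟩ := hw
        obtain ⟨C', hC', hb'⟩ := hx
        exact hTdisj _ v hne C hC C' hC' x hb ⟨hb'.choose, hb'.choose_spec⟩
      simp only [ψ, dif_pos h, hv]
    have hsat : ∀ v, ∀ R ∈ T v, R ≠ γ v (φ v) → ∃ l ∈ R, ψ l.1 = l.2 := by
      intro v R hR hne
      obtain ⟨l, hl, hval⟩ := hψv v R hR hne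
      refine ⟨l, hl, ?_⟩
      rw [hψval v l.1 ⟨R, hR, l.2, by simpa using hl⟩]
      exact hval
    refine ⟨ψ, ?_, ?_⟩
    · intro C hC
      obtain ⟨a, haC, hne⟩ := hφ C hC
      have haD : a.2 ∈ D a.1 := hF C hC a haC
      have hmem : γ a.1 a.2 ∈ T a.1 := hγmem a.1 a.2 haD
      have hneq : γ a.1 a.2 ≠ γ a.1 (φ a.1) := fun h =>
        hne (hγinj a.1 a.2 haD (φ a.1) (hφD a.1) h).symm
      obtain ⟨l, hl, hval⟩ := hsat a.1 (γ a.1 a.2) hmem hneq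
      exact ⟨l, Finset.mem_biUnion.2 ⟨a, haC, hl⟩, hval⟩
    · intro v _ R hR hRne
      exact hsat v R hR (hRne (φ v) (hφD v))
end

section
/- Let G^1,...,G^l be compatible nontrivial monotonic hypergraph sequences with common vertex sets V_n, let Q^k_n be the complete k-uniform hypergraph on V_n, and for real x let M(x) be the least n with |V_n| > x. Then for every real s > 1 and every m ≥ 0: the mixed number vdW_{l+m}(G^1,...,G^l, Q^2,...,Q^2) (with m copies of Q^2) equals vdW_{l+1}(G^1,...,G^l, Q^{m+1}), and both are at most max( M(s·m), gcr((G^1,...,G^l), 1 − 1/s) ). -/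
open scoped BigOperators

/-- The mixed convergence rate `gcr` of a compatible family of hypergraph
sequences (common vertex sets `V n`, edge sets `E i n`), as an element of `ℕ∞`. -/
noncomputable def gcr {α ι : Type*} [Fintype ι] (V : ℕ → Finset α)
    (E : ι → ℕ → Set (Finset α)) (q : ℝ) : ℕ∞ :=
  sInf ((fun n : ℕ => (n : ℕ∞)) '' {n : ℕ | 1 ≤ n ∧ ∀ n' ≥ n, ∀ S : ι → Finset α,
    (∀ i, S i ⊆ V n') → (Pairwise fun i j => Disjoint (S i) (S j)) →
    (∀ i, ∀ H ∈ E i n', ¬ H ⊆ S i) →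
    (∑ i, ((S i).card : ℝ)) / ((V n').card : ℝ) < q})

/-- The mixed generalized van der Waerden number of a compatible family of
hypergraph sequences: the least `n ≥ 1` (in `ℕ∞`) such that every colouring
`f : V_n → ι` has, for some colour `i`, a hyperedge of `G^i_n` monochromatic in
colour `i`. -/
noncomputable def vdwNum {α ι : Type*} (V : ℕ → Finset α)
    (E : ι → ℕ → Set (Finset α)) : ℕ∞ :=
  sInf ((fun n : ℕ => (n : ℕ∞)) '' {n : ℕ | 1 ≤ n ∧
    ∀ f : α → ι, ∃ i, ∃ H ∈ E i n, ∀ v ∈ H, f v = i})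

/-- `M(x)`: the least `n ≥ 1` (in `ℕ∞`) with `|V n| > x`. -/
noncomputable def Mbound {α : Type*} (V : ℕ → Finset α) (x : ℝ) : ℕ∞ :=
  sInf ((fun n : ℕ => (n : ℕ∞)) '' {n : ℕ | 1 ≤ n ∧ x < ((V n).card : ℝ)})

/-- The complete `k`-uniform hypergraph sequence on the vertex sets `V n`. -/
def completeSeq {α : Type*} (V : ℕ → Finset α) (k : ℕ) : ℕ → Set (Finset α) :=
  fun n => {H : Finset α | H ⊆ V n ∧ H.card = k}

/-! ### Auxiliary lemmas -/

private lemma sInf_image_coe {S : Set ℕ} (hS : S.Nonempty) :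
    sInf ((fun n : ℕ => (n : ℕ∞)) '' S) = ((sInf S : ℕ) : ℕ∞) := by
  apply le_antisymm
  · exact sInf_le ⟨_, Nat.sInf_mem hS, rfl⟩
  · refine le_sInf ?_
    rintro x ⟨n, hn, rfl⟩
    show ((sInf S : ℕ) : ℕ∞) ≤ ((n : ℕ) : ℕ∞)
    exact_mod_cast Nat.sInf_le hn

private lemma V_mono {α : Type*} {V : ℕ → Finset α} (hV : ∀ n, V n ⊆ V (n + 1)) :
    ∀ {a b : ℕ}, a ≤ b → V a ⊆ V b := by
  intro a b hab
  induction hab with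
  | refl => exact subset_rfl
  | step h ih => exact ih.trans (hV _)

/-- The key combinatorial equivalence: colourings with `m` transversal colours
(edges of size 2) force a monochromatic edge iff colourings with a single extra
colour (edges of size `m+1`) do. -/
private lemma colouring_equiv {α : Type*} (l : ℕ) (hl : 1 ≤ l)
    (V : ℕ → Finset α) (E : Fin l → ℕ → Set (Finset α))
    (hEsub : ∀ i n, ∀ H ∈ E i n, H ⊆ V n) (m n : ℕ) :
    (∀ f : α → Fin l ⊕ Fin m, ∃ i,
        ∃ H ∈ Sum.elim E (fun _ : Fin m => completeSeq V 2) i n, ∀ v ∈ H, f v = i) ↔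
    (∀ g : α → Fin l ⊕ Fin 1, ∃ i,
        ∃ H ∈ Sum.elim E (fun _ : Fin 1 => completeSeq V (m + 1)) i n, ∀ v ∈ H, g v = i) := by
  classical
  constructor
  · -- P1 → P2
    intro P1 g
    set T : Finset α := (V n).filter (fun v => g v = Sum.inr 0) with hT
    by_cases hTc : m + 1 ≤ T.card
    · obtain ⟨H, hHT, hHcard⟩ := Finset.exists_subset_card_eq hTc
      refine ⟨Sum.inr 0, H, ⟨hHT.trans (Finset.filter_subset _ _), hHcard⟩, ?_⟩
      intro v hv
      exact (Finset.mem_filter.mp (hHT hv)).2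
    · push_neg at hTc
      have hTm : T.card ≤ m := Nat.lt_succ_iff.mp hTc
      set f : α → Fin l ⊕ Fin m := fun v =>
        if hv : v ∈ T then Sum.inr (Fin.castLE hTm (T.equivFin ⟨v, hv⟩))
        else (match g v with
          | .inl i => Sum.inl i
          | .inr _ => Sum.inl ⟨0, hl⟩) with hf
      obtain ⟨i, H, hH, hmono⟩ := P1 f
      rcases i with i | j
      · -- monochromatic edge of `E i n` under `f`; show it is monochromatic under `g`
        refine ⟨Sum.inl i, H, hH, ?_⟩
        intro v hv
        have hvV : v ∈ V n := hEsub i n H hH hv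
        have hfv := hmono v hv
        by_cases hvT : v ∈ T
        · simp only [hf, dif_pos hvT] at hfv; exact absurd hfv (by simp)
        · simp only [hf, dif_neg hvT] at hfv
          rcases hgv : g v with a | b
          · rw [hgv] at hfv; simpa using hfv
          · exfalso
            exact hvT (Finset.mem_filter.mpr ⟨hvV, by rw [hgv, Fin.eq_zero b]⟩)
      · -- monochromatic edge of size 2 in colour `inr j`: impossible
        exfalso
        obtain ⟨hHV, hHcard⟩ := hH
        obtain ⟨u, hu, v, hv, huv⟩ := Finset.one_lt_card.mp (by rw [hHcard]; norm_num)
        have key : ∀ w ∈ H, ∃ hw : w ∈ T, Fin.castLE hTm (T.equivFin ⟨w, hw⟩) = j := by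
          intro w hw
          have hfw := hmono w hw
          by_cases hwT : w ∈ T
          · refine ⟨hwT, ?_⟩
            simp only [hf, dif_pos hwT] at hfw
            exact Sum.inr.inj hfw
          · exfalso
            simp only [hf, dif_neg hwT] at hfw
            rcases hgw : g w with a | b <;> rw [hgw] at hfw <;> simp at hfw
        obtain ⟨hu', hju⟩ := key u hu
        obtain ⟨hv', hjv⟩ := key v hv
        have : (⟨u, hu'⟩ : T) = ⟨v, hv'⟩ := by
          apply T.equivFin.injective
          apply Fin.castLE_injective hTm
          rw [hju, hjv]
        exact huv (Subtype.ext_iff.mp this)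
  · -- P2 → P1
    intro P2 f
    set g : α → Fin l ⊕ Fin 1 := fun v => Sum.map id (fun _ => (0 : Fin 1)) (f v) with hg
    obtain ⟨i, H, hH, hmono⟩ := P2 g
    rcases i with i | j
    · refine ⟨Sum.inl i, H, hH, ?_⟩
      intro v hv
      have hgv := hmono v hv
      rcases hfv : f v with a | b <;> rw [hg] at hgv <;> simp only [hfv, Sum.map] at hgv
      · simpa using hgv
      · simp at hgv
    · obtain ⟨hHV, hHcard⟩ := hH
      have hHne : H.Nonempty := Finset.card_pos.mp (by omega)
      obtain ⟨v0, hv0⟩ := hHne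
      have hb : ∀ w ∈ H, ∃ b : Fin m, f w = Sum.inr b := by
        intro w hw
        have hgw := hmono w hw
        rcases hfw : f w with a | b
        · rw [hg] at hgw; simp only [hfw, Sum.map] at hgw; simp at hgw
        · exact ⟨b, rfl⟩
      obtain ⟨b0, _⟩ := hb v0 hv0
      set c : α → Fin m := fun v => Sum.elim (fun _ => b0) id (f v) with hc
      obtain ⟨u, hu, v, hv, huv, hcuv⟩ :=
        Finset.exists_ne_map_eq_of_card_lt_of_maps_to (t := (Finset.univ : Finset (Fin m)))
          (by rw [hHcard, Finset.card_univ, Fintype.card_fin]; omega)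
          (fun a _ => Finset.mem_univ (c a))
      obtain ⟨bu, hbu⟩ := hb u hu
      obtain ⟨bv, hbv⟩ := hb v hv
      have hcu : c u = bu := by rw [hc]; simp [hbu]
      have hcv : c v = bv := by rw [hc]; simp [hbv]
      refine ⟨Sum.inr bu, {u, v}, ⟨?_, Finset.card_pair huv⟩, ?_⟩
      · intro w hw
        rcases Finset.mem_insert.mp hw with h | h
        · exact hHV (h ▸ hu)
        · exact hHV ((Finset.mem_singleton.mp h) ▸ hv)
      · intro w hw
        rcases Finset.mem_insert.mp hw with h | h
        · rw [h, hbu]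
        · rw [Finset.mem_singleton.mp h, hbv]
          congr 1
          rw [← hcv, ← hcuv, hcu]

/-- The key bound: if `n ≥ 1`, `s·m < |V n|` and the `gcr` property holds at `n`,
then every `(l+1)`-colouring has a monochromatic edge. -/
private lemma core_bound {α : Type*} (l : ℕ) (V : ℕ → Finset α)
    (E : Fin l → ℕ → Set (Finset α)) (hEsub : ∀ i n, ∀ H ∈ E i n, H ⊆ V n)
    (s : ℝ) (hs : 1 < s) (m n : ℕ)
    (hVpos : 0 < (V n).card) (hM : s * (m : ℝ) < ((V n).card : ℝ))
    (hgcr : ∀ S : Fin l → Finset α,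
      (∀ i, S i ⊆ V n) → (Pairwise fun i j => Disjoint (S i) (S j)) →
      (∀ i, ∀ H ∈ E i n, ¬ H ⊆ S i) →
      (∑ i, ((S i).card : ℝ)) / ((V n).card : ℝ) < 1 - 1 / s) :
    ∀ g : α → Fin l ⊕ Fin 1, ∃ i,
      ∃ H ∈ Sum.elim E (fun _ : Fin 1 => completeSeq V (m + 1)) i n, ∀ v ∈ H, g v = i := by
  classical
  intro g
  by_contra hno
  push_neg at hno
  set S : Fin l → Finset α := fun i => (V n).filter (fun v => g v = Sum.inl i) with hS
  set T : Finset α := (V n).filter (fun v => g v = Sum.inr 0) with hT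
  -- T is small
  have hTm : T.card ≤ m := by
    by_contra hTc
    push_neg at hTc
    obtain ⟨H, hHT, hHcard⟩ := Finset.exists_subset_card_eq (Nat.succ_le_of_lt hTc)
    obtain ⟨v, hv, hgv⟩ := hno (Sum.inr 0) H ⟨hHT.trans (Finset.filter_subset _ _), hHcard⟩
    exact hgv (Finset.mem_filter.mp (hHT hv)).2
  -- the S i satisfy the gcr hypotheses
  have hsum : (∑ i, ((S i).card : ℝ)) / ((V n).card : ℝ) < 1 - 1 / s := by
    refine hgcr S (fun i => Finset.filter_subset _ _) ?_ ?_
    · intro i j hij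
      rw [Finset.disjoint_left]
      intro a hai haj
      have h1 := (Finset.mem_filter.mp hai).2
      have h2 := (Finset.mem_filter.mp haj).2
      exact hij (Sum.inl.inj (h1.symm.trans h2))
    · intro i H hH hsub
      obtain ⟨v, hv, hgv⟩ := hno (Sum.inl i) H hH
      exact hgv (Finset.mem_filter.mp (hsub hv)).2
  -- counting
  have hcover : V n ⊆ (Finset.univ.biUnion S) ∪ T := by
    intro v hv
    rcases hgv : g v with a | b
    · exact Finset.mem_union_left _ (Finset.mem_biUnion.mpr
        ⟨a, Finset.mem_univ a, Finset.mem_filter.mpr ⟨hv, hgv⟩⟩)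
    · exact Finset.mem_union_right _ (Finset.mem_filter.mpr ⟨hv, by rw [hgv, Fin.eq_zero b]⟩)
  have hcount : (V n).card ≤ (∑ i, (S i).card) + T.card := by
    calc (V n).card ≤ ((Finset.univ.biUnion S) ∪ T).card := Finset.card_le_card hcover
      _ ≤ (Finset.univ.biUnion S).card + T.card := Finset.card_union_le _ _
      _ ≤ (∑ i, (S i).card) + T.card := by
          exact Nat.add_le_add_right (Finset.card_biUnion_le) _
  -- real arithmetic contradiction
  set cV : ℝ := ((V n).card : ℝ) with hcV
  have hcVpos : (0 : ℝ) < cV := by rw [hcV]; exact_mod_cast hVpos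
  have hs0 : (0 : ℝ) < s := lt_trans one_pos hs
  have h1 : (∑ i, ((S i).card : ℝ)) < (1 - 1 / s) * cV := (div_lt_iff₀ hcVpos).mp hsum
  have h2 : (m : ℝ) < cV / s := (lt_div_iff₀ hs0).mpr (by linarith [hM, mul_comm s (m : ℝ)])
  have h3 : cV ≤ (∑ i, ((S i).card : ℝ)) + (m : ℝ) := by
    have : ((V n).card : ℝ) ≤ ((∑ i, (S i).card : ℕ) : ℝ) + (T.card : ℝ) := by
      exact_mod_cast hcount
    have hTm' : (T.card : ℝ) ≤ (m : ℝ) := by exact_mod_cast hTm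
    push_cast at this
    linarith
  have heq : (1 - 1 / s) * cV + cV / s = cV := by field_simp; ring
  linarith

/-- For compatible nontrivial monotonic hypergraph sequences
`G^1,...,G^l` (`l ≥ 1`) with common vertex sets `V n`, complete `k`-uniform
hypergraphs `Q^k` on `V n`, every real `s > 1` and every `m ≥ 0`:
`vdW_{l+m}(G^1,...,G^l,Q^2,...,Q^2) = vdW_{l+1}(G^1,...,G^l,Q^{m+1})`, and both are
at most `max(M(s·m), gcr((G^1,...,G^l), 1 − 1/s))`. -/
theorem vdw_transversal_extension_bound {α : Type*} (l : ℕ) (hl : 1 ≤ l)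
    (V : ℕ → Finset α) (E : Fin l → ℕ → Set (Finset α))
    (hV : ∀ n, V n ⊆ V (n + 1)) (hV1 : (V 1).Nonempty)
    (hE : ∀ i n, E i n ⊆ E i (n + 1)) (hEne : ∀ i n, ∅ ∉ E i n)
    (hEsub : ∀ i n, ∀ H ∈ E i n, H ⊆ V n)
    (s : ℝ) (hs : 1 < s) (m : ℕ) :
    vdwNum V (Sum.elim E (fun _ : Fin m => completeSeq V 2))
        = vdwNum V (Sum.elim E (fun _ : Fin 1 => completeSeq V (m + 1)))
      ∧ vdwNum V (Sum.elim E (fun _ : Fin 1 => completeSeq V (m + 1)))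
        ≤ max (Mbound V (s * (m : ℝ))) (gcr V E (1 - 1 / s)) := by
  classical
  constructor
  · -- equality of the two van der Waerden numbers
    unfold vdwNum
    congr 1
    apply congrArg
    ext n
    simp only [Set.mem_setOf_eq]
    exact and_congr_right fun _ => colouring_equiv l hl V E hEsub m n
  · -- the upper bound
    set SA : Set ℕ := {n : ℕ | 1 ≤ n ∧ s * (m : ℝ) < ((V n).card : ℝ)} with hSA
    set SB : Set ℕ := {n : ℕ | 1 ≤ n ∧ ∀ n' ≥ n, ∀ S : Fin l → Finset α,
      (∀ i, S i ⊆ V n') → (Pairwise fun i j => Disjoint (S i) (S j)) →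
      (∀ i, ∀ H ∈ E i n', ¬ H ⊆ S i) →
      (∑ i, ((S i).card : ℝ)) / ((V n').card : ℝ) < 1 - 1 / s} with hSB
    by_cases hA : SA.Nonempty
    · by_cases hB : SB.Nonempty
      · -- both finite; take the max of the minima
        have hMb : Mbound V (s * (m : ℝ)) = ((sInf SA : ℕ) : ℕ∞) := sInf_image_coe hA
        have hGc : gcr V E (1 - 1 / s) = ((sInf SB : ℕ) : ℕ∞) := sInf_image_coe hB
        set a := sInf SA with ha
        set b := sInf SB with hb
        have haSA : a ∈ SA := Nat.sInf_mem hA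
        have hbSB : b ∈ SB := Nat.sInf_mem hB
        set N := max a b with hN
        have hN1 : 1 ≤ N := le_trans haSA.1 (le_max_left a b)
        have hVpos : 0 < (V N).card :=
          Finset.card_pos.mpr (hV1.mono (V_mono hV hN1))
        have hM : s * (m : ℝ) < ((V N).card : ℝ) := by
          refine lt_of_lt_of_le haSA.2 ?_
          exact_mod_cast Finset.card_le_card (V_mono hV (le_max_left a b))
        have hgcrN := fun S h1 h2 h3 => hbSB.2 N (le_max_right a b) S h1 h2 h3
        have hmem : N ∈ {n : ℕ | 1 ≤ n ∧ ∀ f : α → Fin l ⊕ Fin 1, ∃ i,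
            ∃ H ∈ Sum.elim E (fun _ : Fin 1 => completeSeq V (m + 1)) i n,
            ∀ v ∈ H, f v = i} :=
          ⟨hN1, core_bound l V E hEsub s hs m N hVpos hM hgcrN⟩
        calc vdwNum V (Sum.elim E (fun _ : Fin 1 => completeSeq V (m + 1)))
            ≤ ((N : ℕ) : ℕ∞) := sInf_le ⟨N, hmem, rfl⟩
          _ = max ((a : ℕ∞)) ((b : ℕ∞)) := by
              rw [hN]
              exact_mod_cast (Nat.mono_cast (α := ℕ∞)).map_max
          _ = max (Mbound V (s * (m : ℝ))) (gcr V E (1 - 1 / s)) := by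
              rw [hMb, hGc]
      · have : gcr V E (1 - 1 / s) = ⊤ := by
          unfold gcr
          rw [← hSB, Set.not_nonempty_iff_eq_empty.mp hB, Set.image_empty, sInf_empty]
        rw [this, max_eq_right le_top]
        exact le_top
    · have : Mbound V (s * (m : ℝ)) = ⊤ := by
        unfold Mbound
        rw [← hSA, Set.not_nonempty_iff_eq_empty.mp hA, Set.image_empty, sInf_empty]
      rw [this, max_eq_left le_top]
      exact le_top
end
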